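/- arXiv:2509.09182 — 2 statements merged into one kernel-verified Lean document; each statement's English description precedes it below -/
import Mathlib

section
/- For k > 0 and η > 0, the quantile-based fractional generalized cumulative past entropy of the half-logistic distribution, whose quantile density function is q(p) = 2k/(1 − p²), equals 2^{−η} k ζ(η+1); that is, (1/Γ(η+1)) ∫₀¹ p (−ln p)^η · 2k/(1 − p²) dp = 2^{−η} k ζ(η+1), where ζ(s) = Σ_{k≥1} k^{−s}. -/
open MeasureTheory Real Set

/-- The Riemann zeta function on the reals, `ζ(s) = Σ_{k ≥ 1} k ^ (-s)`. -/
noncomputable def zetaReal (s : ℝ) : ℝ := ∑' n : ℕ, 1 / ((n : ℝ) + 1) ^ s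

lemma image_exp_neg_Ioi : (fun t : ℝ => Real.exp (-t)) '' Set.Ioi 0 = Set.Ioo 0 1 := by
  ext x
  constructor
  · rintro ⟨t, ht, rfl⟩
    exact ⟨Real.exp_pos _, by
      rw [Real.exp_lt_one_iff]; simpa using ht⟩
  · rintro ⟨hx0, hx1⟩
    exact ⟨-Real.log x, by simpa using Real.log_neg hx0 hx1, by
      simp [Real.exp_log hx0]⟩

lemma key_integral (η : ℝ) (hη : 0 < η) (n : ℕ) :
    ∫ p in Set.Ioo (0:ℝ) 1, p ^ (2*n+1) * (-Real.log p) ^ η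
      = (1 / (2*(n:ℝ)+2)) ^ (η+1) * Real.Gamma (η+1) := by
  rw [← image_exp_neg_Ioi,
    integral_image_eq_integral_abs_deriv_smul measurableSet_Ioi
      (fun t _ => by
        simpa [Function.comp_def] using ((Real.hasDerivAt_exp (-t)).comp t (hasDerivAt_neg t)).hasDerivWithinAt)
      (fun a _ b _ h => neg_injective (Real.exp_injective h))]
  rw [show (1 / (2*(n:ℝ)+2)) ^ (η+1) * Real.Gamma (η+1)
      = ∫ t : ℝ in Set.Ioi 0, t ^ ((η+1) - 1) * Real.exp (-((2*(n:ℝ)+2) * t)) from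
    (integral_rpow_mul_exp_neg_mul_Ioi (by linarith) (by positivity)).symm]
  refine setIntegral_congr_fun measurableSet_Ioi (fun t ht => ?_)
  have h1 : Real.log (Real.exp (-t)) = -t := Real.log_exp _
  have h2 : Real.exp (-t) ^ (2*n+1) = Real.exp (-((2*(n:ℝ)+1) * t)) := by
    rw [← Real.exp_nat_mul]
    push_cast
    ring_nf
  have h3 : Real.exp (-t) * Real.exp (-((2*(n:ℝ)+1) * t)) = Real.exp (-((2*(n:ℝ)+2) * t)) := by
    rw [← Real.exp_add]; ring_nf
  simp only [smul_eq_mul, h1, neg_neg, abs_neg, abs_of_pos (Real.exp_pos _), h2,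
    add_sub_cancel_right]
  rw [← h3]; ring

lemma key_integrable (η : ℝ) (hη : 0 < η) (n : ℕ) :
    MeasureTheory.IntegrableOn (fun p : ℝ => p ^ (2*n+1) * (-Real.log p) ^ η)
      (Set.Ioo (0:ℝ) 1) := by
  rw [← image_exp_neg_Ioi,
    integrableOn_image_iff_integrableOn_abs_deriv_smul measurableSet_Ioi
      (fun t _ => by
        simpa [Function.comp_def] using ((Real.hasDerivAt_exp (-t)).comp t (hasDerivAt_neg t)).hasDerivWithinAt)
      (fun a _ b _ h => neg_injective (Real.exp_injective h))]
  have : MeasureTheory.IntegrableOn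
      (fun t : ℝ => t ^ η * Real.exp (-(2*(n:ℝ)+2) * t ^ (1:ℝ))) (Set.Ioi 0) :=
    integrableOn_rpow_mul_exp_neg_mul_rpow (by linarith) one_pos (by positivity)
  refine this.congr_fun (fun t ht => ?_) measurableSet_Ioi
  have h1 : Real.log (Real.exp (-t)) = -t := Real.log_exp _
  have h2 : Real.exp (-t) ^ (2*n+1) = Real.exp (-((2*(n:ℝ)+1) * t)) := by
    rw [← Real.exp_nat_mul]; push_cast; ring_nf
  have ht' : (0:ℝ) < t := ht
  have h3 : Real.exp (-t) * Real.exp (-((2*(n:ℝ)+1) * t)) = Real.exp (-((2*(n:ℝ)+2) * t)) := by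
    rw [← Real.exp_add]; ring_nf
  simp only [smul_eq_mul, h1, neg_neg, abs_neg, abs_of_pos (Real.exp_pos _), h2,
    Real.rpow_one]
  rw [show -(2*(n:ℝ)+2) * t = -((2*(n:ℝ)+2) * t) by ring, ← h3]; ring

/-- The QFGCPE of the half-logistic distribution, whose quantile density
function is `q(p) = 2k / (1 - p²)`, equals `2^(-η) k ζ(η+1)`. -/
theorem qfgcpe_half_logistic (k η : ℝ) (hk : 0 < k) (hη : 0 < η) :
    (1 / Real.Gamma (η + 1)) *
        ∫ p in (0 : ℝ)..1, p * (-Real.log p) ^ η * (2 * k / (1 - p ^ 2))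
      = 2 ^ (-η) * k * zetaReal (η + 1) := by
  have hG : 0 < Real.Gamma (η + 1) := Real.Gamma_pos_of_pos (by linarith)
  set F : ℕ → ℝ → ℝ := fun n p => 2 * k * (p ^ (2*n+1) * (-Real.log p) ^ η) with hF
  have hval : ∀ n : ℕ, (∫ p in Set.Ioo (0:ℝ) 1, F n p)
      = 2 * k * ((1/(2*(n:ℝ)+2)) ^ (η+1) * Real.Gamma (η+1)) := by
    intro n
    rw [hF]
    simp only
    rw [MeasureTheory.integral_const_mul, key_integral η hη n]
  have hint : ∀ n : ℕ, MeasureTheory.IntegrableOn (F n) (Set.Ioo (0:ℝ) 1) := fun n =>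
    (key_integrable η hη n).const_mul _
  have hnn : ∀ n : ℕ, ∀ p ∈ Set.Ioo (0:ℝ) 1, 0 ≤ F n p := by
    intro n p hp
    have h1 : (0:ℝ) < -Real.log p := by
      have := Real.log_neg hp.1 hp.2; linarith
    have h2 : (0:ℝ) ≤ p ^ (2*n+1) := pow_nonneg hp.1.le _
    have h3 : (0:ℝ) ≤ (-Real.log p) ^ η := Real.rpow_nonneg h1.le _
    positivity
  -- per-term value simplification
  have hterm : ∀ n : ℕ, 2 * k * ((1/(2*(n:ℝ)+2)) ^ (η+1) * Real.Gamma (η+1))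
      = (Real.Gamma (η+1) * (2 ^ (-η) * k)) * (1/((n:ℝ)+1) ^ (η+1)) := by
    intro n
    have hn1 : (0:ℝ) < (n:ℝ) + 1 := by positivity
    have e1 : (1/(2*(n:ℝ)+2)) = (1/2) * (1/((n:ℝ)+1)) := by
      field_simp
    have e2 : ((1:ℝ)/(2*(n:ℝ)+2)) ^ (η+1)
        = (1/2 : ℝ) ^ (η+1) * (1/((n:ℝ)+1)) ^ (η+1) := by
      rw [e1, Real.mul_rpow (by norm_num) (by positivity)]
    have e3 : ((1:ℝ)/((n:ℝ)+1)) ^ (η+1) = 1/((n:ℝ)+1) ^ (η+1) := by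
      rw [one_div, Real.inv_rpow hn1.le, one_div]
    have e4 : 2 * ((1:ℝ)/2) ^ (η+1) = 2 ^ (-η) := by
      rw [one_div, ← Real.rpow_neg_one (2:ℝ), ← Real.rpow_mul (by norm_num : (0:ℝ) ≤ 2),
        show (2:ℝ) * (2:ℝ) ^ (-1*(η+1)) = (2:ℝ) ^ (1:ℝ) * (2:ℝ) ^ (-1*(η+1)) by
          rw [Real.rpow_one],
        ← Real.rpow_add (by norm_num : (0:ℝ) < 2)]
      congr 1
      ring
    rw [e2, e3]
    calc 2 * k * ((1/2:ℝ) ^ (η+1) * (1/((n:ℝ)+1) ^ (η+1)) * Real.Gamma (η+1))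
        = (2 * ((1:ℝ)/2) ^ (η+1)) * k * Real.Gamma (η+1) * (1/((n:ℝ)+1) ^ (η+1)) := by ring
      _ = (Real.Gamma (η+1) * (2 ^ (-η) * k)) * (1/((n:ℝ)+1) ^ (η+1)) := by rw [e4]; ring
  have hbase : Summable (fun n : ℕ => 1/((n:ℝ)+1) ^ (η+1)) := by
    have h1 : Summable (fun n : ℕ => 1/(n:ℝ) ^ (η+1)) :=
      Real.summable_one_div_nat_rpow.mpr (by linarith)
    have h2 := h1.comp_injective Nat.succ_injective
    refine h2.congr fun n => ?_
    simp only [Function.comp]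
    push_cast
    ring_nf
  -- interchange sum and integral
  have hkey : (∫ p in Set.Ioo (0:ℝ) 1, p * (-Real.log p) ^ η * (2 * k / (1 - p ^ 2)))
      = ∑' n : ℕ, ∫ p in Set.Ioo (0:ℝ) 1, F n p := by
    have hsumnorm : Summable (fun n : ℕ => ∫ p in Set.Ioo (0:ℝ) 1, ‖F n p‖) := by
      refine Summable.congr ?_ (fun n => (setIntegral_congr_fun measurableSet_Ioo
        (fun p hp => (Real.norm_of_nonneg (hnn n p hp)))).symm)
      refine Summable.congr ?_ (fun n => (hval n).symm)
      exact Summable.congr (hbase.mul_left _) (fun n => (hterm n).symm)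
    rw [show (∫ p in Set.Ioo (0:ℝ) 1, p * (-Real.log p) ^ η * (2 * k / (1 - p ^ 2)))
        = ∫ p in Set.Ioo (0:ℝ) 1, ∑' n : ℕ, F n p from ?_]
    · exact (MeasureTheory.integral_tsum_of_summable_integral_norm hint hsumnorm).symm
    refine setIntegral_congr_fun measurableSet_Ioo (fun p hp => ?_)
    have hp2 : p ^ 2 < 1 := by nlinarith [hp.1, hp.2]
    have hgeom : ∑' n : ℕ, (p^2) ^ n = (1 - p^2)⁻¹ :=
      tsum_geometric_of_lt_one (sq_nonneg p) hp2
    have hfn : ∀ n : ℕ, F n p = (2 * k * p * (-Real.log p) ^ η) * (p^2) ^ n := by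
      intro n
      rw [hF]
      simp only
      rw [pow_succ, pow_mul]
      ring
    rw [tsum_congr hfn, tsum_mul_left, hgeom]
    have h1p : (1:ℝ) - p^2 ≠ 0 := by nlinarith [hp.1, hp.2]
    field_simp
  rw [intervalIntegral.integral_of_le zero_le_one, MeasureTheory.integral_Ioc_eq_integral_Ioo,
    hkey]
  have : ∑' n : ℕ, (∫ p in Set.Ioo (0:ℝ) 1, F n p)
      = (Real.Gamma (η+1) * (2 ^ (-η) * k)) * zetaReal (η+1) := by
    rw [tsum_congr (fun n => (hval n).trans (hterm n)), tsum_mul_left, zetaReal]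
  rw [this]
  field_simp
end

section
/- Let K > 0, η > 0, and let b be a nonnegative integer, and consider a random variable with quantile density function q(v) = K v^b (1−v)^{−(a+b)} with a + b = 1, i.e., q(v) = K v^b/(1−v). Then its quantile-based fractional generalized cumulative past entropy equals K (ζ(η+1) − Σ_{m=1}^{b+1} 1/m^{η+1}); that is, (1/Γ(η+1)) ∫₀¹ p (−ln p)^η K p^b/(1−p) dp = K (ζ(η+1) − Σ_{m=1}^{b+1} m^{−(η+1)}). -/
open MeasureTheory Real

private lemma expNeg_deriv : ∀ x ∈ Set.Ioi (0:ℝ),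
    HasDerivWithinAt (fun t : ℝ => Real.exp (-t)) (-Real.exp (-x)) (Set.Ioi 0) x := by
  intro x _
  simpa [Function.comp_def] using ((Real.hasDerivAt_exp (-x)).comp x (hasDerivAt_neg x)).hasDerivWithinAt

private lemma expNeg_image :
    (fun t : ℝ => Real.exp (-t)) '' (Set.Ioi 0) = Set.Ioo 0 1 := by
  ext y
  constructor
  · rintro ⟨t, ht, rfl⟩
    exact ⟨Real.exp_pos _, by rw [Real.exp_lt_one_iff]; simpa using ht⟩
  · rintro ⟨h0, h1⟩
    refine ⟨-Real.log y, ?_, by simp [Real.exp_log h0]⟩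
    simpa using Real.log_neg h0 h1

private lemma expNeg_inj : Set.InjOn (fun t : ℝ => Real.exp (-t)) (Set.Ioi 0) := by
  intro a _ b _ h
  have := Real.exp_injective h
  linarith

private lemma key_ptwise {η : ℝ} (n : ℕ) {t : ℝ} :
    |(-Real.exp (-t))| • ((Real.exp (-t)) ^ n * (-Real.log (Real.exp (-t))) ^ η)
      = t ^ ((η + 1) - 1) * Real.exp (-(((n : ℝ) + 1) * t)) := by
  rw [smul_eq_mul, abs_neg, abs_of_pos (Real.exp_pos _), Real.log_exp, neg_neg,
    add_sub_cancel_right, ← Real.exp_nat_mul, ← mul_assoc, ← Real.exp_add, mul_comm]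
  congr 1
  ring

private lemma key_eq {η : ℝ} (hη : 0 < η) (n : ℕ) :
    ∫ p in Set.Ioo (0:ℝ) 1, p ^ n * (-Real.log p) ^ η
      = (1 / ((n : ℝ) + 1)) ^ (η + 1) * Real.Gamma (η + 1) := by
  rw [← expNeg_image,
    integral_image_eq_integral_abs_deriv_smul measurableSet_Ioi expNeg_deriv expNeg_inj]
  rw [← Real.integral_rpow_mul_exp_neg_mul_Ioi (by linarith : (0:ℝ) < η + 1)
    (by positivity : (0:ℝ) < (n : ℝ) + 1)]
  exact setIntegral_congr_fun measurableSet_Ioi fun t _ => key_ptwise n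

private lemma key_int {η : ℝ} (hη : 0 < η) (n : ℕ) :
    IntegrableOn (fun p : ℝ => p ^ n * (-Real.log p) ^ η) (Set.Ioo (0:ℝ) 1) := by
  rw [← expNeg_image,
    integrableOn_image_iff_integrableOn_abs_deriv_smul measurableSet_Ioi expNeg_deriv expNeg_inj]
  have h := integrableOn_rpow_mul_exp_neg_mul_rpow (show (-1:ℝ) < η by linarith) (show (0:ℝ) < 1 by norm_num)
    (show (0:ℝ) < (n : ℝ) + 1 by positivity)
  refine h.congr_fun (fun t _ => ?_) measurableSet_Ioi
  beta_reduce
  rw [key_ptwise n, add_sub_cancel_right, Real.rpow_one, neg_mul]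

/-- For a random variable with quantile density `q(v) = K v^b (1-v)^{-(a+b)}`
in the case `a + b = 1` with `b` a nonnegative integer, i.e. `q(v) = K v^b / (1-v)`,
the QFGCPE equals `K (ζ(η+1) - Σ_{m=1}^{b+1} m^{-(η+1)})`. -/
theorem qfgcpe_case_sum_one (K η : ℝ) (b : ℕ) (hK : 0 < K) (hη : 0 < η) :
    (1 / Real.Gamma (η + 1)) *
        ∫ p in (0 : ℝ)..1, p * (-Real.log p) ^ η * (K * p ^ b / (1 - p))
      = K * (zetaReal (η + 1) - ∑ m ∈ Finset.Icc 1 (b + 1), 1 / (m : ℝ) ^ (η + 1)) := by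
  have hG : 0 < Real.Gamma (η + 1) := Real.Gamma_pos_of_pos (by linarith)
  set g : ℕ → ℝ := fun n => 1 / ((n : ℝ) + 1) ^ (η + 1) with hg
  have hgs : Summable g := by
    have h0 : Summable fun n : ℕ => 1 / (n : ℝ) ^ (η + 1) :=
      (Real.summable_one_div_nat_rpow.mpr (by linarith))
    have := h0.comp_injective Nat.succ_injective
    refine this.congr fun n => ?_
    simp only [Function.comp, hg]
    push_cast
    ring_nf
  set F : ℕ → ℝ → ℝ := fun k p => K * (p ^ (b + 1 + k) * (-Real.log p) ^ η) with hF
  -- pointwise series expansion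
  have hpt : ∀ p ∈ Set.Ioo (0:ℝ) 1,
      p * (-Real.log p) ^ η * (K * p ^ b / (1 - p)) = ∑' k, F k p := by
    rintro p ⟨hp0, hp1⟩
    have hgeo : ∑' k : ℕ, p ^ k = (1 - p)⁻¹ := tsum_geometric_of_lt_one hp0.le hp1
    have : ∑' k, F k p = (K * (p ^ (b + 1) * (-Real.log p) ^ η)) * ∑' k : ℕ, p ^ k := by
      rw [← tsum_mul_left]
      exact tsum_congr fun k => by rw [pow_add]; ring
    rw [this, hgeo, pow_succ]
    field_simp
  -- value of each integral
  have hval : ∀ k : ℕ, ∫ p in Set.Ioo (0:ℝ) 1, F k p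
      = K * Real.Gamma (η + 1) * g (k + (b + 1)) := by
    intro k
    simp only [hF]
    rw [MeasureTheory.integral_const_mul, key_eq hη (b + 1 + k)]
    rw [hg, Real.div_rpow zero_le_one (by positivity), Real.one_rpow]
    push_cast
    ring_nf
  have hint : ∀ k : ℕ, IntegrableOn (F k) (Set.Ioo (0:ℝ) 1) := fun k =>
    (key_int hη (b + 1 + k)).const_mul K
  have hnonneg : ∀ k : ℕ, ∀ p ∈ Set.Ioo (0:ℝ) 1, 0 ≤ F k p := by
    rintro k p ⟨hp0, hp1⟩
    have hl : (0:ℝ) ≤ -Real.log p := by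
      simpa using Real.log_nonpos hp0.le hp1.le
    have := Real.rpow_nonneg hl η
    positivity
  have hnorm : ∀ k : ℕ, ∫ p in Set.Ioo (0:ℝ) 1, ‖F k p‖
      = K * Real.Gamma (η + 1) * g (k + (b + 1)) := by
    intro k
    rw [← hval k]
    exact setIntegral_congr_fun measurableSet_Ioo fun p hp =>
      Real.norm_of_nonneg (hnonneg k p hp)
  have hsum : Summable fun k => ∫ p in Set.Ioo (0:ℝ) 1, ‖F k p‖ := by
    simp_rw [hnorm]
    exact ((summable_nat_add_iff (b + 1)).mpr hgs).mul_left _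
  -- swap integral and sum
  have hswap : ∫ p in Set.Ioo (0:ℝ) 1, (∑' k, F k p)
      = ∑' k, ∫ p in Set.Ioo (0:ℝ) 1, F k p :=
    (MeasureTheory.integral_tsum_of_summable_integral_norm hint hsum).symm
  rw [intervalIntegral.integral_of_le zero_le_one,
    MeasureTheory.integral_Ioc_eq_integral_Ioo,
    setIntegral_congr_fun measurableSet_Ioo hpt, hswap]
  simp_rw [hval]
  rw [tsum_mul_left]
  have htail := Summable.sum_add_tsum_nat_add (f := g) (b + 1) hgs
  have hzeta : zetaReal (η + 1) = ∑' n, g n := rfl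
  have hfin : ∑ m ∈ Finset.Icc 1 (b + 1), 1 / (m : ℝ) ^ (η + 1)
      = ∑ i ∈ Finset.range (b + 1), g i := by
    rw [← Finset.Ico_add_one_right_eq_Icc, Finset.sum_Ico_eq_sum_range]
    refine Finset.sum_congr (by norm_num) fun i _ => ?_
    simp only [hg]
    push_cast
    ring_nf
  rw [hzeta, hfin]
  have : ∑' (i : ℕ), g (i + (b + 1)) = (∑' n, g n) - ∑ i ∈ Finset.range (b + 1), g i := by
    linarith
  rw [this]
  field_simp
end
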